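/- arXiv:2412.11595 — 4 statements merged into one kernel-verified Lean document; each statement's English description precedes it below -/
import Mathlib

section
/- Let ι and κ be finite nonempty index types, and let A : Matrix ι ι ℂ and B : Matrix κ κ ℂ be positive definite Hermitian matrices. Then log (A ⊗ₖ B) = (log A) ⊗ₖ (1 : Matrix κ κ ℂ) + (1 : Matrix ι ι ℂ) ⊗ₖ (log B), where log denotes the continuous functional calculus applied with Real.log. -/
/-!
Writing `log A ⊗ₖ 1 + 1 ⊗ₖ log B` as `M`, the two summands commute and `X ↦ X ⊗ₖ 1`,
`Y ↦ 1 ⊗ₖ Y` are continuous ring homomorphisms, so `exp M = exp (log A) ⊗ₖ exp (log B) = A ⊗ₖ B`.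
Since `M` is Hermitian, `log (exp M) = M`.
-/

open Matrix Kronecker
open scoped ComplexOrder

/-- `matLog ρ` is `Real.log` applied to a Hermitian matrix `ρ` through the
continuous functional calculus (`Matrix.IsHermitian.cfc`); junk value `0` on
non-Hermitian matrices. -/
noncomputable def matLog {n : Type*} [Fintype n] [DecidableEq n]
    (ρ : Matrix n n ℂ) : Matrix n n ℂ :=
  if h : ρ.IsHermitian then h.cfc Real.log else 0

open NormedSpace

namespace Matrix

variable {m n R : Type*}

theorem IsHermitian.kronecker [CommSemiring R] [StarRing R] {X : Matrix m m R}
    {Y : Matrix n n R} (hX : X.IsHermitian) (hY : Y.IsHermitian) : (X ⊗ₖ Y).IsHermitian := by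
  rw [IsHermitian, conjTranspose_kronecker, hX.eq, hY.eq]

variable [Fintype m] [Fintype n] [DecidableEq m] [DecidableEq n]

section CommSemiring

variable [CommSemiring R]

variable (n) in
def kroneckerOneRingHom : Matrix m m R →+* Matrix (m × n) (m × n) R where
  toFun X := X ⊗ₖ (1 : Matrix n n R)
  map_one' := one_kronecker_one
  map_mul' X Y := by rw [← mul_kronecker_mul, mul_one]
  map_zero' := zero_kronecker _
  map_add' X Y := add_kronecker X Y _

variable (m) in
def oneKroneckerRingHom : Matrix n n R →+* Matrix (m × n) (m × n) R where
  toFun Y := (1 : Matrix m m R) ⊗ₖ Y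
  map_one' := one_kronecker_one
  map_mul' X Y := by rw [← mul_kronecker_mul, mul_one]
  map_zero' := kronecker_zero _
  map_add' X Y := kronecker_add _ X Y

theorem commute_kronecker_one_one_kronecker (X : Matrix m m R) (Y : Matrix n n R) :
    Commute (X ⊗ₖ (1 : Matrix n n R)) ((1 : Matrix m m R) ⊗ₖ Y) := by
  simp only [Commute, SemiconjBy, ← mul_kronecker_mul, one_mul, mul_one]

variable [TopologicalSpace R] [IsTopologicalSemiring R]

theorem continuous_kroneckerOneRingHom :
    Continuous (kroneckerOneRingHom (m := m) (R := R) n) :=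
  continuous_matrix fun i j => (continuous_id.matrix_elem i.1 j.1).mul continuous_const

theorem continuous_oneKroneckerRingHom :
    Continuous (oneKroneckerRingHom (n := n) (R := R) m) :=
  continuous_matrix fun i j => continuous_const.mul (continuous_id.matrix_elem i.2 j.2)

end CommSemiring

section Exp

variable [NormedCommRing R] [NormedAlgebra ℚ R] [CompleteSpace R]

theorem map_exp (f : Matrix m m R →+* Matrix n n R) (hf : Continuous f) (X : Matrix m m R) :
    f (exp X) = exp (f X) := by
  let : NormedRing (Matrix m m R) := Matrix.linftyOpNormedRing
  let : NormedAlgebra ℚ (Matrix m m R) := Matrix.linftyOpNormedAlgebra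
  let : NormedRing (Matrix n n R) := Matrix.linftyOpNormedRing
  let : NormedAlgebra ℚ (Matrix n n R) := Matrix.linftyOpNormedAlgebra
  -- the `linftyOp` uniformity is the entrywise one, but instance search does not unfold it
  have : @CompleteSpace (Matrix m m R) PseudoMetricSpace.toUniformSpace := by
    exact inferInstanceAs (CompleteSpace (m → m → R))
  exact NormedSpace.map_exp f hf X

theorem exp_kronecker_one_add_one_kronecker (X : Matrix m m R) (Y : Matrix n n R) :
    exp (X ⊗ₖ (1 : Matrix n n R) + (1 : Matrix m m R) ⊗ₖ Y) = exp X ⊗ₖ exp Y := by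
  have hX : exp (X ⊗ₖ (1 : Matrix n n R)) = exp X ⊗ₖ (1 : Matrix n n R) :=
    (map_exp (kroneckerOneRingHom n) continuous_kroneckerOneRingHom X).symm
  have hY : exp ((1 : Matrix m m R) ⊗ₖ Y) = (1 : Matrix m m R) ⊗ₖ exp Y :=
    (map_exp (oneKroneckerRingHom m) continuous_oneKroneckerRingHom Y).symm
  rw [exp_add_of_commute _ _ (commute_kronecker_one_one_kronecker X Y), hX, hY,
    ← mul_kronecker_mul, mul_one, one_mul]

end Exp

end Matrix

section MatLog

variable {n : Type*} [Fintype n] [DecidableEq n]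

-- `CFC.log` needs a normed algebra structure on matrices; its value does not depend on the choice.
open scoped Matrix.Norms.L2Operator in
theorem matLog_eq_log {ρ : Matrix n n ℂ} (hρ : ρ.IsHermitian) : matLog ρ = CFC.log ρ := by
  rw [matLog, dif_pos hρ, ← hρ.cfc_eq, CFC.log]

theorem isHermitian_matLog (ρ : Matrix n n ℂ) : (matLog ρ).IsHermitian := by
  by_cases hρ : ρ.IsHermitian
  · rw [matLog, dif_pos hρ, ← hρ.cfc_eq]
    exact cfc_predicate Real.log ρ
  · simp only [matLog, dif_neg hρ, isHermitian_zero]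

theorem exp_matLog {ρ : Matrix n n ℂ} (hρ : ρ.PosDef) : exp (matLog ρ) = ρ := by
  open scoped MatrixOrder Matrix.Norms.L2Operator in
  rw [matLog_eq_log hρ.isHermitian, CFC.exp_log ρ hρ.isStrictlyPositive]

theorem matLog_exp {X : Matrix n n ℂ} (hX : X.IsHermitian) : matLog (exp X) = X := by
  open scoped Matrix.Norms.L2Operator in
  rw [matLog_eq_log hX.exp, CFC.log_exp X hX]

end MatLog

theorem matLog_kronecker_general {ι κ : Type*} [Fintype ι] [Fintype κ]
    [DecidableEq ι] [DecidableEq κ]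
    (A : Matrix ι ι ℂ) (B : Matrix κ κ ℂ) (hA : A.PosDef) (hB : B.PosDef) :
    matLog (A ⊗ₖ B) =
      matLog A ⊗ₖ (1 : Matrix κ κ ℂ) + (1 : Matrix ι ι ℂ) ⊗ₖ matLog B := by
  have hM : (matLog A ⊗ₖ (1 : Matrix κ κ ℂ) + (1 : Matrix ι ι ℂ) ⊗ₖ matLog B).IsHermitian :=
    ((isHermitian_matLog A).kronecker isHermitian_one).add
      (isHermitian_one.kronecker (isHermitian_matLog B))
  calc matLog (A ⊗ₖ B)
      = matLog (exp (matLog A ⊗ₖ (1 : Matrix κ κ ℂ) + (1 : Matrix ι ι ℂ) ⊗ₖ matLog B)) := by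
        rw [exp_kronecker_one_add_one_kronecker, exp_matLog hA, exp_matLog hB]
    _ = _ := matLog_exp hM

/-- The logarithm of a Kronecker product of positive definite matrices:
`log (A ⊗ₖ B) = log A ⊗ₖ 1 + 1 ⊗ₖ log B`. -/
theorem matLog_kronecker {ι κ : Type*} [Fintype ι] [Fintype κ]
    [DecidableEq ι] [DecidableEq κ] [Nonempty ι] [Nonempty κ]
    (A : Matrix ι ι ℂ) (B : Matrix κ κ ℂ) (hA : A.PosDef) (hB : B.PosDef) :
    matLog (A ⊗ₖ B) =
      matLog A ⊗ₖ (1 : Matrix κ κ ℂ) + (1 : Matrix ι ι ℂ) ⊗ₖ matLog B :=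
  matLog_kronecker_general A B hA hB
end

section
/- Let ι and κ be finite nonempty index types, and let ρ : Matrix ι ι ℂ and σ : Matrix κ κ ℂ be positive definite Hermitian matrices with Matrix.trace ρ = 1 and Matrix.trace σ = 1. Then the von Neumann entropy is additive over the Kronecker product: S(ρ ⊗ₖ σ) = S(ρ) + S(σ). -/
/-! With spectral decompositions `ρ = U D U*` and `σ = V E V*`, the Kronecker product is
`ρ ⊗ₖ σ = (U ⊗ₖ V) (D ⊗ₖ E) (U ⊗ₖ V)*`, so its characteristic polynomial, and hence its multiset of
eigenvalues, is that of the products `λᵢ μⱼ`. The entropy is the sum of `η(x) = -x log x` over the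
eigenvalues, and `η(x y) = y η(x) + x η(y)`; summing over `i, j` and using `∑ λᵢ = ∑ μⱼ = 1`
gives `S(ρ ⊗ₖ σ) = S(ρ) + S(σ)`. -/

open Matrix Kronecker
open scoped ComplexOrder

/-- The von Neumann entropy `S(ρ) = -Re (tr (ρ log ρ))`. -/
noncomputable def vnEntropy {n : Type*} [Fintype n] [DecidableEq n]
    (ρ : Matrix n n ℂ) : ℝ :=
  -(Matrix.trace (ρ * matLog ρ)).re

/-- The quantum relative entropy `S(ρ‖σ) = Re (tr (ρ (log ρ - log σ)))`. -/
noncomputable def relEnt {n : Type*} [Fintype n] [DecidableEq n]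
    (ρ σ : Matrix n n ℂ) : ℝ :=
  (Matrix.trace (ρ * (matLog ρ - matLog σ))).re

/-- Partial trace over the second tensor factor. -/
noncomputable def ptr₂ {ι κ : Type*} [Fintype κ]
    (M : Matrix (ι × κ) (ι × κ) ℂ) : Matrix ι ι ℂ :=
  Matrix.of fun i i' => ∑ k, M (i, k) (i', k)

/-- Partial trace over the first tensor factor. -/
noncomputable def ptr₁ {ι κ : Type*} [Fintype ι]
    (M : Matrix (ι × κ) (ι × κ) ℂ) : Matrix κ κ ℂ :=
  Matrix.of fun k k' => ∑ i, M (i, k) (i, k')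

open Polynomial Real

namespace Matrix.IsHermitian

variable {𝕜 n m : Type*} [RCLike 𝕜] [Fintype n] [DecidableEq n] [Fintype m] [DecidableEq m]
  {A : Matrix n n 𝕜}

lemma trace_cfc (hA : A.IsHermitian) (f : ℝ → ℝ) :
    (cfc f A).trace = ∑ i, (f (hA.eigenvalues i) : 𝕜) := by
  rw [cfc_eq hA, IsHermitian.cfc, Unitary.conjStarAlgAut_apply, trace_mul_cycle,
    Unitary.coe_star_mul_self, one_mul, trace_diagonal]
  rfl

lemma sum_eigenvalues_eq_one (hA : A.IsHermitian) (h : A.trace = 1) :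
    ∑ i, hA.eigenvalues i = 1 := by
  exact_mod_cast hA.trace_eq_sum_eigenvalues.symm.trans h

lemma sum_eigenvalues_eq_of_charpoly_eq {M : Type*} [AddCommMonoid M] (hA : A.IsHermitian)
    {d : n → ℝ} (hd : A.charpoly = ∏ i, (X - C (d i : 𝕜))) (g : ℝ → M) :
    ∑ i, g (hA.eigenvalues i) = ∑ i, g (d i) := by
  have hroots : Finset.univ.val.map hA.eigenvalues = Finset.univ.val.map d := by
    apply Multiset.map_injective (RCLike.ofReal_injective (K := 𝕜))
    rw [Multiset.map_map, Multiset.map_map, ← hA.roots_charpoly_eq_eigenvalues, hd, roots_prod]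
    · simp
    · simp [Finset.prod_ne_zero_iff, X_sub_C_ne_zero]
  simpa [Multiset.map_map, Function.comp_def] using congrArg (fun s => (s.map g).sum) hroots

lemma charpoly_kronecker {B : Matrix m m 𝕜} (hA : A.IsHermitian) (hB : B.IsHermitian) :
    (A ⊗ₖ B).charpoly
      = ∏ p : n × m, (X - C ((hA.eigenvalues p.1 * hB.eigenvalues p.2 : ℝ) : 𝕜)) := by
  conv_lhs => rw [hA.spectral_theorem, hB.spectral_theorem]
  simp only [Unitary.conjStarAlgAut_apply, mul_kronecker_mul]
  rw [charpoly_mul_comm, ← mul_assoc, ← mul_kronecker_mul, Unitary.coe_star_mul_self,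
    Unitary.coe_star_mul_self, one_kronecker_one, one_mul, diagonal_kronecker_diagonal,
    charpoly_diagonal]
  simp

end Matrix.IsHermitian

lemma vnEntropy_eq_sum_negMulLog {n : Type*} [Fintype n] [DecidableEq n] {A : Matrix n n ℂ}
    (hA : A.IsHermitian) : vnEntropy A = ∑ i, negMulLog (hA.eigenvalues i) := by
  have hlog : A * matLog A = cfc (fun x => x * log x) A := by
    rw [matLog, dif_pos hA, ← hA.cfc_eq, cfc_mul (fun x => x) log A continuousOn_id
      (finite_real_spectrum.continuousOn _), cfc_id' ℝ A]
  rw [vnEntropy, hlog, hA.trace_cfc]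
  simp [negMulLog, Complex.re_sum]

lemma sum_negMulLog_mul {ι κ : Type*} [Fintype ι] [Fintype κ] (a : ι → ℝ) (b : κ → ℝ) :
    ∑ p : ι × κ, negMulLog (a p.1 * b p.2)
      = (∑ j, b j) * ∑ i, negMulLog (a i) + (∑ i, a i) * ∑ j, negMulLog (b j) := by
  simp only [Fintype.sum_prod_type, negMulLog_mul, Finset.sum_add_distrib, Finset.mul_sum,
    Finset.sum_mul]
  exact congrArg _ Finset.sum_comm

theorem vnEntropy_kronecker_general {ι κ : Type*} [Fintype ι] [Fintype κ]
    [DecidableEq ι] [DecidableEq κ]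
    (ρ : Matrix ι ι ℂ) (σ : Matrix κ κ ℂ) (hρ : ρ.PosDef) (hσ : σ.PosDef)
    (hρ1 : Matrix.trace ρ = 1) (hσ1 : Matrix.trace σ = 1) :
    vnEntropy (ρ ⊗ₖ σ) = vnEntropy ρ + vnEntropy σ := by
  have hρσ := (hρ.kronecker hσ).isHermitian
  rw [vnEntropy_eq_sum_negMulLog hρσ,
    hρσ.sum_eigenvalues_eq_of_charpoly_eq (hρ.isHermitian.charpoly_kronecker hσ.isHermitian),
    sum_negMulLog_mul, vnEntropy_eq_sum_negMulLog hρ.isHermitian,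
    vnEntropy_eq_sum_negMulLog hσ.isHermitian, hρ.isHermitian.sum_eigenvalues_eq_one hρ1,
    hσ.isHermitian.sum_eigenvalues_eq_one hσ1, one_mul, one_mul]

/-- Additivity of the von Neumann entropy over Kronecker products:
`S(ρ ⊗ₖ σ) = S(ρ) + S(σ)`. -/
theorem vnEntropy_kronecker {ι κ : Type*} [Fintype ι] [Fintype κ]
    [DecidableEq ι] [DecidableEq κ] [Nonempty ι] [Nonempty κ]
    (ρ : Matrix ι ι ℂ) (σ : Matrix κ κ ℂ) (hρ : ρ.PosDef) (hσ : σ.PosDef)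
    (hρ1 : Matrix.trace ρ = 1) (hσ1 : Matrix.trace σ = 1) :
    vnEntropy (ρ ⊗ₖ σ) = vnEntropy ρ + vnEntropy σ :=
  vnEntropy_kronecker_general ρ σ hρ hσ hρ1 hσ1
end

section
/- Let ι and κ be finite nonempty index types, let ρ, ρ' : Matrix (ι × κ) (ι × κ) ℂ be positive definite Hermitian matrices with Matrix.trace ρ = 1 and Matrix.trace ρ' = 1, and suppose they have equal marginals: ptr₂ ρ = ptr₂ ρ' and ptr₁ ρ = ptr₁ ρ'. Let σ_A : Matrix ι ι ℂ and σ_B : Matrix κ κ ℂ be positive definite Hermitian matrices. Then S(ρ ‖ σ_A ⊗ₖ σ_B) − S(ρ' ‖ σ_A ⊗ₖ σ_B) = S(ρ') − S(ρ). -/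
open Matrix Kronecker
open scoped ComplexOrder

/-!
The eigenvector unitaries `U_A`, `U_B` of `σ_A`, `σ_B` give a unitary `U_A ⊗ₖ U_B` diagonalising
`σ_A ⊗ₖ σ_B` with eigenvalues `a_i b_k`. Since `log (a_i b_k) = log a_i + log b_k`, this yields
`log (σ_A ⊗ₖ σ_B) = log σ_A ⊗ₖ 1 + 1 ⊗ₖ log σ_B`, so `tr (ρ log (σ_A ⊗ₖ σ_B))` only depends on
the marginals `ptr₂ ρ` and `ptr₁ ρ`. As `S(ρ‖σ) = -S(ρ) - Re tr (ρ log σ)`, the cross terms cancel.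
-/

namespace Matrix

variable {m n : Type*} [Fintype m] [Fintype n]

theorem mul_mul_star_kronecker_mul_mul_star {R : Type*} [CommSemiring R] [StarRing R]
    (U X : Matrix m m R) (V Y : Matrix n n R) :
    (U * X * star U) ⊗ₖ (V * Y * star V) = (U ⊗ₖ V) * (X ⊗ₖ Y) * star (U ⊗ₖ V) := by
  simp only [star_eq_conjTranspose, conjTranspose_kronecker, mul_kronecker_mul]

variable [DecidableEq m] [DecidableEq n]

theorem diagonal_comp_mul_eq_mul_diagonal_comp {R : Type*} [CommRing R] [NoZeroDivisors R]
    {a : m → R} {b : n → R} {C : Matrix m n R} (h : diagonal a * C = C * diagonal b)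
    (g : R → R) : diagonal (g ∘ a) * C = C * diagonal (g ∘ b) := by
  ext i j
  have hij : a i * C i j = C i j * b j := by simpa using congr_fun₂ h i j
  rcases eq_or_ne (C i j) 0 with hC | hC
  · simp [hC]
  · have hab : a i = b j := mul_right_cancel₀ hC (by rw [hij, mul_comm])
    simp [hab, mul_comm]

namespace IsHermitian

variable {𝕜 : Type*} [RCLike 𝕜] {A : Matrix m m 𝕜}

/-- `hA.cfc` is built from the eigenbasis chosen by `hA.eigenvectorUnitary`, which for a Kronecker
product need not be the product of the factors' eigenbases. -/
theorem cfc_eq_of_eq_mul_diagonal_mul_star (hA : A.IsHermitian) {V : Matrix m m 𝕜}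
    (hV : V ∈ unitaryGroup m 𝕜) {μ : m → ℝ} (hAV : A = V * diagonal (RCLike.ofReal ∘ μ) * star V)
    (f : ℝ → ℝ) : hA.cfc f = V * diagonal (RCLike.ofReal ∘ f ∘ μ) * star V := by
  set U : Matrix m m 𝕜 := (hA.eigenvectorUnitary : Matrix m m 𝕜)
  have hU : U ∈ unitaryGroup m 𝕜 := hA.eigenvectorUnitary.2
  have hUA : A = U * diagonal (RCLike.ofReal ∘ hA.eigenvalues) * star U := hA.spectral_theorem
  set C : Matrix m m 𝕜 := star U * V
  have hC : diagonal (RCLike.ofReal ∘ hA.eigenvalues) * C = C * diagonal (RCLike.ofReal ∘ μ) :=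
    calc diagonal (RCLike.ofReal ∘ hA.eigenvalues) * C
        = star U * (U * diagonal (RCLike.ofReal ∘ hA.eigenvalues) * star U) * V := by
          simp [C, ← mul_assoc, Unitary.star_mul_self_of_mem hU]
      _ = star U * (V * diagonal (RCLike.ofReal ∘ μ) * star V) * V := by rw [← hUA, ← hAV]
      _ = C * diagonal (RCLike.ofReal ∘ μ) := by
          simp [C, mul_assoc, Unitary.star_mul_self_of_mem hV]
  have hfC : diagonal (RCLike.ofReal ∘ f ∘ hA.eigenvalues) * C
      = C * diagonal (RCLike.ofReal ∘ f ∘ μ) := by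
    simpa [Function.comp_def] using
      diagonal_comp_mul_eq_mul_diagonal_comp hC fun z ↦ (f (RCLike.re z) : 𝕜)
  have hUC : U * C = V := by simp [C, ← mul_assoc, Unitary.mul_star_self_of_mem hU]
  calc hA.cfc f = U * (diagonal (RCLike.ofReal ∘ f ∘ hA.eigenvalues) * C) * star V := by
        simp [IsHermitian.cfc, C, U, mul_assoc, Unitary.mul_star_self_of_mem hV]
    _ = V * diagonal (RCLike.ofReal ∘ f ∘ μ) * star V := by rw [hfC, ← mul_assoc, hUC]

end IsHermitian

end Matrix

theorem matLog_of_isHermitian {n : Type*} [Fintype n] [DecidableEq n] {A : Matrix n n ℂ}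
    (hA : A.IsHermitian) : matLog A = hA.cfc Real.log := dif_pos hA

theorem matLog_kronecker_s12 {ι κ : Type*} [Fintype ι] [Fintype κ] [DecidableEq ι] [DecidableEq κ]
    {σA : Matrix ι ι ℂ} {σB : Matrix κ κ ℂ} (hσA : σA.PosDef) (hσB : σB.PosDef) :
    matLog (σA ⊗ₖ σB) = matLog σA ⊗ₖ (1 : Matrix κ κ ℂ) + (1 : Matrix ι ι ℂ) ⊗ₖ matLog σB := by
  have hA := hσA.isHermitian
  have hB := hσB.isHermitian
  set UA : Matrix ι ι ℂ := (hA.eigenvectorUnitary : Matrix ι ι ℂ)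
  set UB : Matrix κ κ ℂ := (hB.eigenvectorUnitary : Matrix κ κ ℂ)
  have hUA : UA ∈ unitaryGroup ι ℂ := hA.eigenvectorUnitary.2
  have hUB : UB ∈ unitaryGroup κ ℂ := hB.eigenvectorUnitary.2
  set d : ι × κ → ℝ := fun p ↦ hA.eigenvalues p.1 * hB.eigenvalues p.2
  have hdiag : σA ⊗ₖ σB = (UA ⊗ₖ UB) * diagonal (RCLike.ofReal ∘ d) * star (UA ⊗ₖ UB) := by
    conv_lhs => rw [hA.spectral_theorem, hB.spectral_theorem]
    rw [Unitary.conjStarAlgAut_apply, Unitary.conjStarAlgAut_apply,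
      mul_mul_star_kronecker_mul_mul_star, diagonal_kronecker_diagonal]
    congr! with p
    simp [d]
  have hlog : diagonal (RCLike.ofReal ∘ Real.log ∘ d)
      = diagonal (RCLike.ofReal ∘ Real.log ∘ hA.eigenvalues) ⊗ₖ (1 : Matrix κ κ ℂ)
        + (1 : Matrix ι ι ℂ) ⊗ₖ diagonal (RCLike.ofReal ∘ Real.log ∘ hB.eigenvalues) := by
    rw [← diagonal_one, ← diagonal_one, diagonal_kronecker_diagonal, diagonal_kronecker_diagonal,
      diagonal_add]
    congr! with p
    simp [d, Real.log_mul (hσA.eigenvalues_pos p.1).ne' (hσB.eigenvalues_pos p.2).ne']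
  rw [matLog_of_isHermitian (hσA.kronecker hσB).isHermitian,
    IsHermitian.cfc_eq_of_eq_mul_diagonal_mul_star _ (kronecker_mem_unitary hUA hUB) hdiag, hlog,
    mul_add, add_mul, ← mul_mul_star_kronecker_mul_mul_star, ← mul_mul_star_kronecker_mul_mul_star,
    matLog_of_isHermitian hA, matLog_of_isHermitian hB]
  simp [IsHermitian.cfc, UA, UB, Unitary.mul_star_self_of_mem hUA, Unitary.mul_star_self_of_mem hUB]

section PartialTrace

variable {ι κ : Type*} [Fintype ι] [Fintype κ]

theorem trace_mul_kronecker_one [DecidableEq κ] (M : Matrix (ι × κ) (ι × κ) ℂ) (X : Matrix ι ι ℂ) :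
    trace (M * (X ⊗ₖ (1 : Matrix κ κ ℂ))) = trace (ptr₂ M * X) := by
  simp only [trace, diag, mul_apply, kroneckerMap_apply, one_apply, ptr₂, of_apply,
    Fintype.sum_prod_type, mul_ite, mul_one, mul_zero, Finset.sum_ite_eq', Finset.mem_univ,
    if_true, Finset.sum_mul]
  exact Finset.sum_congr rfl fun i _ ↦ Finset.sum_comm

theorem trace_mul_one_kronecker [DecidableEq ι] (M : Matrix (ι × κ) (ι × κ) ℂ) (Y : Matrix κ κ ℂ) :
    trace (M * ((1 : Matrix ι ι ℂ) ⊗ₖ Y)) = trace (ptr₁ M * Y) := by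
  simp only [trace, diag, mul_apply, kroneckerMap_apply, one_apply, ptr₁, of_apply,
    Fintype.sum_prod_type, ite_mul, one_mul, zero_mul, mul_ite, mul_zero, Finset.sum_ite_irrel,
    Finset.sum_const_zero, Finset.sum_ite_eq', Finset.mem_univ, if_true, Finset.sum_mul]
  rw [Finset.sum_comm]
  exact Finset.sum_congr rfl fun k _ ↦ Finset.sum_comm

end PartialTrace

theorem relEnt_eq_neg_vnEntropy_sub {n : Type*} [Fintype n] [DecidableEq n]
    (ρ σ : Matrix n n ℂ) :
    relEnt ρ σ = -vnEntropy ρ - (trace (ρ * matLog σ)).re := by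
  simp [relEnt, vnEntropy, mul_sub, trace_sub]

theorem trace_mul_matLog_kronecker {ι κ : Type*} [Fintype ι] [Fintype κ] [DecidableEq ι]
    [DecidableEq κ] {σA : Matrix ι ι ℂ} {σB : Matrix κ κ ℂ} (hσA : σA.PosDef) (hσB : σB.PosDef)
    (ρ : Matrix (ι × κ) (ι × κ) ℂ) :
    trace (ρ * matLog (σA ⊗ₖ σB)) = trace (ptr₂ ρ * matLog σA) + trace (ptr₁ ρ * matLog σB) := by
  rw [matLog_kronecker_s12 hσA hσB, mul_add, trace_add, trace_mul_kronecker_one,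
    trace_mul_one_kronecker]

theorem relEnt_diff_of_equal_marginals_general {ι κ : Type*} [Fintype ι] [Fintype κ]
    [DecidableEq ι] [DecidableEq κ]
    (ρ ρ' : Matrix (ι × κ) (ι × κ) ℂ)
    (h₂ : ptr₂ ρ = ptr₂ ρ') (h₁ : ptr₁ ρ = ptr₁ ρ')
    (σA : Matrix ι ι ℂ) (σB : Matrix κ κ ℂ)
    (hσA : σA.PosDef) (hσB : σB.PosDef) :
    relEnt ρ (σA ⊗ₖ σB) - relEnt ρ' (σA ⊗ₖ σB) = vnEntropy ρ' - vnEntropy ρ := by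
  rw [relEnt_eq_neg_vnEntropy_sub, relEnt_eq_neg_vnEntropy_sub,
    trace_mul_matLog_kronecker hσA hσB, trace_mul_matLog_kronecker hσA hσB, h₂, h₁]
  ring

/-- Two states with equal marginals have relative entropies to a common product
reference differing only by the difference of their von Neumann entropies:
`S(ρ ‖ σ_A ⊗ₖ σ_B) - S(ρ' ‖ σ_A ⊗ₖ σ_B) = S(ρ') - S(ρ)`. -/
theorem relEnt_diff_of_equal_marginals {ι κ : Type*} [Fintype ι] [Fintype κ]
    [DecidableEq ι] [DecidableEq κ] [Nonempty ι] [Nonempty κ]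
    (ρ ρ' : Matrix (ι × κ) (ι × κ) ℂ) (hρ : ρ.PosDef) (hρ' : ρ'.PosDef)
    (hρ1 : Matrix.trace ρ = 1) (hρ'1 : Matrix.trace ρ' = 1)
    (h₂ : ptr₂ ρ = ptr₂ ρ') (h₁ : ptr₁ ρ = ptr₁ ρ')
    (σA : Matrix ι ι ℂ) (σB : Matrix κ κ ℂ)
    (hσA : σA.PosDef) (hσB : σB.PosDef) :
    relEnt ρ (σA ⊗ₖ σB) - relEnt ρ' (σA ⊗ₖ σB) = vnEntropy ρ' - vnEntropy ρ :=
  relEnt_diff_of_equal_marginals_general ρ ρ' h₂ h₁ σA σB hσA hσB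
end

section
/- Let n be a finite nonempty index type, and let ρ, σ : Matrix n n ℂ be positive definite Hermitian matrices with Matrix.trace ρ = 1 and Matrix.trace σ = 1. Then the quantum relative entropy is nonnegative: S(ρ ‖ σ) ≥ 0 (Klein's inequality). -/
open Matrix Kronecker
open scoped ComplexOrder

/-!
Diagonalise `ρ = ∑ pᵢ |uᵢ⟩⟨uᵢ|` and `σ = ∑ qⱼ |vⱼ⟩⟨vⱼ|`. The overlaps `wᵢⱼ = |⟨uᵢ, vⱼ⟩|²` are the
entries of a unitary matrix in absolute value squared, hence form a doubly stochastic matrix, and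
`S(ρ‖σ) = ∑ᵢⱼ wᵢⱼ pᵢ (log pᵢ - log qⱼ) ≥ ∑ᵢⱼ wᵢⱼ (pᵢ - qⱼ) = tr ρ - tr σ`
by the scalar inequality `a - b ≤ a (log a - log b)`, which is `log x ≥ 1 - 1/x`.
-/

open Finset Real

lemma Real.sub_le_mul_log_sub_log {a b : ℝ} (ha : 0 < a) (hb : 0 < b) :
    a - b ≤ a * (log a - log b) := by
  calc a - b = a * (1 - (a / b)⁻¹) := by field_simp
    _ ≤ a * log (a / b) := by
      gcongr
      exact one_sub_inv_le_log_of_pos (by positivity)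
    _ = a * (log a - log b) := by rw [log_div ha.ne' hb.ne']

namespace Matrix

variable {n 𝕜 : Type*} [Fintype n] [DecidableEq n] [RCLike 𝕜]

lemma sum_norm_sq_row_of_mem_unitaryGroup {W : Matrix n n 𝕜} (hW : W ∈ unitaryGroup n 𝕜)
    (i : n) : ∑ j, ‖W i j‖ ^ 2 = 1 := by
  have hii : (W * star W) i i = 1 := by rw [Unitary.mul_star_self_of_mem hW, one_apply_eq]
  simp only [mul_apply, star_apply, RCLike.star_def, RCLike.mul_conj] at hii
  exact_mod_cast hii

lemma sum_norm_sq_col_of_mem_unitaryGroup {W : Matrix n n 𝕜} (hW : W ∈ unitaryGroup n 𝕜)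
    (j : n) : ∑ i, ‖W i j‖ ^ 2 = 1 := by
  simpa [star_apply] using sum_norm_sq_row_of_mem_unitaryGroup (Unitary.star_mem hW) j

lemma re_trace_mul_diagonal_mul_star (W : Matrix n n 𝕜) (d e : n → ℝ) :
    RCLike.re (trace (diagonal (RCLike.ofReal ∘ d) * W * diagonal (RCLike.ofReal ∘ e) * star W)) =
      ∑ i, ∑ j, ‖W i j‖ ^ 2 * (d i * e j) := by
  have hentry (i j : n) :
      (diagonal (RCLike.ofReal ∘ d) * W * diagonal (RCLike.ofReal ∘ e) : Matrix n n 𝕜) i j *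
        star (W i j) = ((‖W i j‖ ^ 2 * (d i * e j) : ℝ) : 𝕜) := by
    simp only [mul_diagonal, diagonal_mul, Function.comp_apply, RCLike.star_def]
    push_cast
    rw [← RCLike.mul_conj]
    ring
  simp only [trace, diag_apply, mul_apply (N := star W), star_apply, hentry, map_sum,
    RCLike.ofReal_re]

namespace IsHermitian

/-- `eigenOverlap hA hB i j = |⟨uᵢ, vⱼ⟩|²` for the eigenbases `u` of `A` and `v` of `B`. -/
noncomputable def eigenOverlap {A B : Matrix n n 𝕜} (hA : A.IsHermitian) (hB : B.IsHermitian)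
    (i j : n) : ℝ :=
  ‖(star (hA.eigenvectorUnitary : Matrix n n 𝕜) * hB.eigenvectorUnitary) i j‖ ^ 2

variable {A B : Matrix n n 𝕜} (hA : A.IsHermitian) (hB : B.IsHermitian)

lemma eigenOverlap_nonneg (i j : n) : 0 ≤ hA.eigenOverlap hB i j := by
  unfold eigenOverlap
  positivity

lemma eigenOverlap_self (i j : n) : hA.eigenOverlap hA i j = if i = j then 1 else 0 := by
  rw [eigenOverlap, Unitary.coe_star_mul_self, one_apply]
  split_ifs <;> simp

lemma sum_eigenOverlap_mul_left (f : n → ℝ) :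
    ∑ i, ∑ j, hA.eigenOverlap hB i j * f i = ∑ i, f i := by
  simp only [← sum_mul, eigenOverlap, sum_norm_sq_row_of_mem_unitaryGroup
    (mul_mem (Unitary.star_mem (SetLike.coe_mem _)) (SetLike.coe_mem _)), one_mul]

lemma sum_eigenOverlap_mul_right (g : n → ℝ) :
    ∑ i, ∑ j, hA.eigenOverlap hB i j * g j = ∑ j, g j := by
  rw [sum_comm]
  simp only [← sum_mul, eigenOverlap, sum_norm_sq_col_of_mem_unitaryGroup
    (mul_mem (Unitary.star_mem (SetLike.coe_mem _)) (SetLike.coe_mem _)), one_mul]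

lemma re_trace_cfc_mul_cfc (f g : ℝ → ℝ) :
    RCLike.re (trace (hA.cfc f * hB.cfc g)) =
      ∑ i, ∑ j, hA.eigenOverlap hB i j * (f (hA.eigenvalues i) * g (hB.eigenvalues j)) := by
  set U : Matrix n n 𝕜 := ↑hA.eigenvectorUnitary
  set V : Matrix n n 𝕜 := ↑hB.eigenvectorUnitary
  have hcycle : trace (U * diagonal (RCLike.ofReal ∘ f ∘ hA.eigenvalues) * star U *
      (V * diagonal (RCLike.ofReal ∘ g ∘ hB.eigenvalues) * star V)) =
      trace (diagonal (RCLike.ofReal ∘ f ∘ hA.eigenvalues) * (star U * V) *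
        diagonal (RCLike.ofReal ∘ g ∘ hB.eigenvalues) * star (star U * V)) := by
    rw [star_mul, star_star]
    simp only [mul_assoc]
    rw [trace_mul_comm U]
    simp only [mul_assoc]
  rw [IsHermitian.cfc, IsHermitian.cfc, Unitary.conjStarAlgAut_apply,
    Unitary.conjStarAlgAut_apply, hcycle, re_trace_mul_diagonal_mul_star]
  rfl

lemma re_trace_cfc_mul_cfc_self (f g : ℝ → ℝ) :
    RCLike.re (trace (hA.cfc f * hA.cfc g)) = ∑ i, f (hA.eigenvalues i) * g (hA.eigenvalues i) := by
  simp [re_trace_cfc_mul_cfc, eigenOverlap_self]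

lemma cfc_id : hA.cfc id = A := (hA.cfc_eq id).symm.trans (_root_.cfc_id ℝ A hA)

end IsHermitian

lemma matLog_of_isHermitian {ρ : Matrix n n ℂ} (hρ : ρ.IsHermitian) : matLog ρ = hρ.cfc log :=
  dif_pos hρ

theorem IsHermitian.relEnt_eq_sum_eigenOverlap {ρ σ : Matrix n n ℂ} (hρ : ρ.IsHermitian)
    (hσ : σ.IsHermitian) :
    relEnt ρ σ = ∑ i, ∑ j, hρ.eigenOverlap hσ i j *
      (hρ.eigenvalues i * (log (hρ.eigenvalues i) - log (hσ.eigenvalues j))) := by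
  have hρlogρ : (trace (ρ * matLog ρ)).re = ∑ i, hρ.eigenvalues i * log (hρ.eigenvalues i) := by
    have h := hρ.re_trace_cfc_mul_cfc_self id log
    rwa [hρ.cfc_id, ← matLog_of_isHermitian] at h
  have hρlogσ : (trace (ρ * matLog σ)).re =
      ∑ i, ∑ j, hρ.eigenOverlap hσ i j * (hρ.eigenvalues i * log (hσ.eigenvalues j)) := by
    have h := hρ.re_trace_cfc_mul_cfc hσ id log
    rwa [hρ.cfc_id, ← matLog_of_isHermitian] at h
  rw [relEnt, mul_sub, trace_sub, Complex.sub_re, hρlogρ, hρlogσ,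
    ← hρ.sum_eigenOverlap_mul_left hσ fun i => hρ.eigenvalues i * log (hρ.eigenvalues i)]
  simp only [mul_sub, sum_sub_distrib]

theorem PosDef.re_trace_sub_re_trace_le_relEnt {ρ σ : Matrix n n ℂ} (hρ : ρ.PosDef)
    (hσ : σ.PosDef) : (trace ρ).re - (trace σ).re ≤ relEnt ρ σ := by
  set p := hρ.1.eigenvalues
  set q := hσ.1.eigenvalues
  calc (trace ρ).re - (trace σ).re = ∑ i, p i - ∑ j, q j := by
        simp [hρ.1.trace_eq_sum_eigenvalues, hσ.1.trace_eq_sum_eigenvalues, p, q]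
    _ = ∑ i, ∑ j, hρ.1.eigenOverlap hσ.1 i j * (p i - q j) := by
        simp only [mul_sub, sum_sub_distrib, IsHermitian.sum_eigenOverlap_mul_left,
          IsHermitian.sum_eigenOverlap_mul_right]
    _ ≤ ∑ i, ∑ j, hρ.1.eigenOverlap hσ.1 i j * (p i * (log (p i) - log (q j))) := by
        gcongr with i _ j _
        · exact IsHermitian.eigenOverlap_nonneg _ _ i j
        · exact sub_le_mul_log_sub_log (hρ.eigenvalues_pos i) (hσ.eigenvalues_pos j)
    _ = relEnt ρ σ := (hρ.1.relEnt_eq_sum_eigenOverlap hσ.1).symm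

end Matrix

theorem relEnt_nonneg_general {n : Type*} [Fintype n] [DecidableEq n]
    (ρ σ : Matrix n n ℂ) (hρ : ρ.PosDef) (hσ : σ.PosDef)
    (hρ1 : Matrix.trace ρ = 1) (hσ1 : Matrix.trace σ = 1) :
    0 ≤ relEnt ρ σ := by
  have hKlein := hρ.re_trace_sub_re_trace_le_relEnt hσ
  rwa [hρ1, hσ1, sub_self] at hKlein

/-- Klein's inequality: the quantum relative entropy between two positive
definite trace-one states is nonnegative. -/
theorem relEnt_nonneg {n : Type*} [Fintype n] [DecidableEq n] [Nonempty n]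
    (ρ σ : Matrix n n ℂ) (hρ : ρ.PosDef) (hσ : σ.PosDef)
    (hρ1 : Matrix.trace ρ = 1) (hσ1 : Matrix.trace σ = 1) :
    0 ≤ relEnt ρ σ :=
  relEnt_nonneg_general ρ σ hρ hσ hρ1 hσ1
end
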